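/- Let L : Σ* → Δ(Σ_$) be a language model and E an equivalence relation on Δ(Σ_$) such that supp(ρ) = supp(ρ') whenever ρ =_E ρ'. If the set of ≡•_E-equivalence classes of Σ* is finite, then the set of ≡_E-equivalence classes of Σ* is finite, and its cardinality is at most the cardinality of the set of ≡•_E-classes plus 1. -/

import Mathlib

/-!
A string of probability zero stays at probability zero under extension, so all null strings
form a single `≡_E`-class. Among strings of positive probability, `≡•_E` refines `≡_E`:
since `E` preserves supports, `u ≡_E v` forces `P (u ++ w) > 0 ↔ P (v ++ w) > 0` for every
`w`, which makes `≡_E` transitive and identifies the `≡_E`-class of a positive `u` with the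
set of strings `≡_E`-related to some positive member of its `≡•_E`-class. Hence the
`≡_E`-classes are the images of the `≡•_E`-classes plus possibly the null class.
-/

/-- `u ≡_E v`: the congruence of the paper coping with null probabilities. -/
def EqvE {α : Type} (L : List α → Option α → ℝ) (P : List α → ℝ)
    (E : (Option α → ℝ) → (Option α → ℝ) → Prop) (u v : List α) : Prop :=
  (0 < P u ↔ 0 < P v) ∧
    ∀ w : List α, 0 < P (u ++ w) → 0 < P (v ++ w) → E (L (u ++ w)) (L (v ++ w))

/-- `u ≡•_E v`: the congruence of Mayr et al. -/
def EqvB {α : Type} (L : List α → Option α → ℝ)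
    (E : (Option α → ℝ) → (Option α → ℝ) → Prop) (u v : List α) : Prop :=
  ∀ w : List α, E (L (u ++ w)) (L (v ++ w))

theorem Set.ncard_le_ncard_add_one_of_subset_insert_image {β γ : Type*} {s : Set γ}
    {t : Set β} {f : β → γ} {a : γ} (h : s ⊆ insert a (f '' t)) (ht : t.Finite) :
    s.ncard ≤ t.ncard + 1 :=
  calc s.ncard ≤ (insert a (f '' t)).ncard := Set.ncard_le_ncard h ((ht.image f).insert a)
    _ ≤ (f '' t).ncard + 1 := Set.ncard_insert_le _ _
    _ ≤ t.ncard + 1 := Nat.add_le_add_right (Set.ncard_image_le ht) 1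

section Congruences

variable {α : Type} {L : List α → Option α → ℝ} {P : List α → ℝ}
  {E : (Option α → ℝ) → (Option α → ℝ) → Prop}

theorem pos_append_singleton_iff (hLnn : ∀ u σ, 0 ≤ L u σ)
    (hPs : ∀ u σ, P (u ++ [σ]) = P u * L u (some σ)) (u : List α) (σ : α) :
    0 < P (u ++ [σ]) ↔ 0 < P u ∧ 0 < L u (some σ) := by
  rw [hPs]
  refine ⟨fun h => ?_, fun h => mul_pos h.1 h.2⟩
  have hPu : 0 < P u := by
    by_contra! hle
    linarith [mul_nonpos_of_nonpos_of_nonneg hle (hLnn u (some σ))]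
  exact ⟨hPu, pos_of_mul_pos_right h hPu.le⟩

theorem pos_of_pos_append (hLnn : ∀ u σ, 0 ≤ L u σ)
    (hPs : ∀ u σ, P (u ++ [σ]) = P u * L u (some σ)) (u w : List α)
    (h : 0 < P (u ++ w)) : 0 < P u := by
  induction w using List.reverseRecOn with
  | nil => simpa using h
  | append_singleton w σ ih =>
    rw [← List.append_assoc, pos_append_singleton_iff hLnn hPs] at h
    exact ih h.1

theorem EqvE.pos_append_iff (hLnn : ∀ u σ, 0 ≤ L u σ)
    (hPs : ∀ u σ, P (u ++ [σ]) = P u * L u (some σ))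
    (hsupp : ∀ ρ ρ', E ρ ρ' → {σ : Option α | 0 < ρ σ} = {σ : Option α | 0 < ρ' σ})
    {u v : List α} (huv : EqvE L P E u v) (w : List α) :
    0 < P (u ++ w) ↔ 0 < P (v ++ w) := by
  induction w using List.reverseRecOn with
  | nil => simpa using huv.1
  | append_singleton w σ ih =>
    simp only [← List.append_assoc, pos_append_singleton_iff hLnn hPs, ih]
    refine and_congr_right fun hv => ?_
    have hsame := hsupp _ _ (huv.2 w (ih.mpr hv) hv)
    exact Set.ext_iff.mp hsame (some σ)

theorem EqvE.trans (hLnn : ∀ u σ, 0 ≤ L u σ)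
    (hPs : ∀ u σ, P (u ++ [σ]) = P u * L u (some σ)) (hE : Equivalence E)
    (hsupp : ∀ ρ ρ', E ρ ρ' → {σ : Option α | 0 < ρ σ} = {σ : Option α | 0 < ρ' σ})
    {u v x : List α} (huv : EqvE L P E u v) (hvx : EqvE L P E v x) : EqvE L P E u x := by
  refine ⟨huv.1.trans hvx.1, fun w hu hx => ?_⟩
  have hv : 0 < P (v ++ w) := (huv.pos_append_iff hLnn hPs hsupp w).mp hu
  exact hE.trans (huv.2 w hu hv) (hvx.2 w hv hx)

theorem EqvB.eqvE {u v : List α} (hu : 0 < P u) (hv : 0 < P v) (huv : EqvB L E u v) :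
    EqvE L P E u v :=
  ⟨iff_of_true hu hv, fun w _ _ => huv w⟩

theorem setOf_eqvE_of_not_pos (hLnn : ∀ u σ, 0 ≤ L u σ)
    (hPs : ∀ u σ, P (u ++ [σ]) = P u * L u (some σ)) {u : List α} (hu : ¬ 0 < P u) :
    {v | EqvE L P E u v} = {v | ¬ 0 < P v} := by
  ext v
  refine ⟨fun h hv => hu (h.1.mpr hv), fun hv => ⟨iff_of_false hu hv, fun w huw _ => ?_⟩⟩
  exact absurd (pos_of_pos_append hLnn hPs u w huw) hu

variable (L P E) in
def positiveSaturation (C : Set (List α)) : Set (List α) :=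
  {v | ∃ u ∈ C, 0 < P u ∧ EqvE L P E u v}

theorem positiveSaturation_setOf_eqvB (hLnn : ∀ u σ, 0 ≤ L u σ)
    (hPs : ∀ u σ, P (u ++ [σ]) = P u * L u (some σ)) (hE : Equivalence E)
    (hsupp : ∀ ρ ρ', E ρ ρ' → {σ : Option α | 0 < ρ σ} = {σ : Option α | 0 < ρ' σ})
    {u : List α} (hu : 0 < P u) :
    positiveSaturation L P E {v | EqvB L E u v} = {v | EqvE L P E u v} := by
  ext v
  constructor
  · rintro ⟨u', hBu', hu', hu'v⟩
    exact (EqvB.eqvE hu hu' hBu').trans hLnn hPs hE hsupp hu'v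
  · intro h
    exact ⟨u, fun w => hE.refl _, hu, h⟩

end Congruences

theorem stmt_8_general (α : Type) [Fintype α]
    (L : List α → Option α → ℝ)
    (hL : ∀ u, (∀ σ, 0 ≤ L u σ) ∧ (∑ σ : Option α, L u σ) = 1)
    (P : List α → ℝ)
    (hPs : ∀ u σ, P (u ++ [σ]) = P u * L u (some σ))
    (E : (Option α → ℝ) → (Option α → ℝ) → Prop)
    (hE : Equivalence E)
    (hsupp : ∀ ρ ρ', E ρ ρ' → {σ : Option α | 0 < ρ σ} = {σ : Option α | 0 < ρ' σ})
    (hfin : {C : Set (List α) | ∃ u, C = {v | EqvB L E u v}}.Finite) :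
    {C : Set (List α) | ∃ u, C = {v | EqvE L P E u v}}.Finite ∧
    {C : Set (List α) | ∃ u, C = {v | EqvE L P E u v}}.ncard ≤
      {C : Set (List α) | ∃ u, C = {v | EqvB L E u v}}.ncard + 1 := by
  have hLnn : ∀ u σ, 0 ≤ L u σ := fun u => (hL u).1
  have hsub : {C : Set (List α) | ∃ u, C = {v | EqvE L P E u v}} ⊆
      insert {v | ¬ 0 < P v}
        (positiveSaturation L P E '' {C : Set (List α) | ∃ u, C = {v | EqvB L E u v}}) := by
    rintro _ ⟨u, rfl⟩
    by_cases hu : 0 < P u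
    · exact Or.inr ⟨_, ⟨u, rfl⟩, positiveSaturation_setOf_eqvB hLnn hPs hE hsupp hu⟩
    · exact Or.inl (setOf_eqvE_of_not_pos hLnn hPs hu)
  exact ⟨((hfin.image _).insert _).subset hsub,
    Set.ncard_le_ncard_add_one_of_subset_insert_image hsub hfin⟩

/-- If the set of `≡•_E`-equivalence classes of `Σ*` is finite,
then the set of `≡_E`-equivalence classes of `Σ*` is finite, and
`#(classes of ≡_E) ≤ #(classes of ≡•_E) + 1`.
(`Σ_$ = Option α`, `none` = `$`; classes are represented as subsets of `Σ*`.) -/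
theorem stmt_8 (α : Type) [Fintype α] [Nonempty α]
    (L : List α → Option α → ℝ)
    (hL : ∀ u, (∀ σ, 0 ≤ L u σ) ∧ (∑ σ : Option α, L u σ) = 1)
    (P : List α → ℝ)
    (hP0 : P [] = 1)
    (hPs : ∀ u σ, P (u ++ [σ]) = P u * L u (some σ))
    (E : (Option α → ℝ) → (Option α → ℝ) → Prop)
    (hE : Equivalence E)
    (hsupp : ∀ ρ ρ', E ρ ρ' → {σ : Option α | 0 < ρ σ} = {σ : Option α | 0 < ρ' σ})
    (hfin : {C : Set (List α) | ∃ u, C = {v | EqvB L E u v}}.Finite) :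
    {C : Set (List α) | ∃ u, C = {v | EqvE L P E u v}}.Finite ∧
    {C : Set (List α) | ∃ u, C = {v | EqvE L P E u v}}.ncard ≤
      {C : Set (List α) | ∃ u, C = {v | EqvB L E u v}}.ncard + 1 :=
  stmt_8_general α L hL P hPs E hE hsupp hfin
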